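/- arXiv:math/0103126 — 2 statements merged into one kernel-verified Lean document; each statement's English description precedes it below -/
import Mathlib

section
/- Let L denote the Lie algebra over ℚ of finitely supported strictly lower triangular ℤ×ℤ matrices. The Lie algebra homomorphism from the quotient of the free Lie algebra over ℚ on generators {f_i}_{i∈ℤ} by the Lie ideal generated by the elements ⁅f_i, ⁅f_i, f_{i+1}⁆⁆ and ⁅f_i, ⁅f_i, f_{i−1}⁆⁆ for all i ∈ ℤ, and ⁅f_i, f_j⁆ for all i, j with |i − j| > 1, determined by sending the class of f_i to E_{i+1,i}, is an isomorphism of Lie algebras. -/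
noncomputable def Eop (a b : ℤ) : Module.End ℚ (ℤ →₀ ℚ) :=
  (Finsupp.lsingle a).comp (Finsupp.lapply b)

def serreRels : Set (FreeLieAlgebra ℚ ℤ) :=
  {x | ∃ i : ℤ, x = ⁅FreeLieAlgebra.of ℚ i,
      ⁅FreeLieAlgebra.of ℚ i, FreeLieAlgebra.of ℚ (i + 1)⁆⁆} ∪
  {x | ∃ i : ℤ, x = ⁅FreeLieAlgebra.of ℚ i,
      ⁅FreeLieAlgebra.of ℚ i, FreeLieAlgebra.of ℚ (i - 1)⁆⁆} ∪
  {x | ∃ i j : ℤ, 1 < |i - j| ∧ x = ⁅FreeLieAlgebra.of ℚ i, FreeLieAlgebra.of ℚ j⁆}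

attribute [local instance 100] LieRing.ofAssociativeRing

noncomputable def phiSL : FreeLieAlgebra ℚ ℤ →ₗ⁅ℚ⁆ Module.End ℚ (ℤ →₀ ℚ) :=
  FreeLieAlgebra.lift ℚ fun i : ℤ => Eop (i + 1) i

/-! Write `e(b + n + 1, b) = ⁅f (b + n), ⁅…, ⁅f (b + 1), f b⁆…⁆⁆` in the quotient `Q`. The Serre
relations give `⁅f i, e(a, b)⁆ = δ(i, a) e(a + 1, b) - δ(i, b - 1) e(a, b - 1)`, exactly as for
the matrix units; so the span of the `e(a, b)` contains the generators and is stable under every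
`ad (f i)`, hence is all of `Q`. The homomorphism sends `e(a, b)` to `E_{a,b}`; these are linearly
independent, so it is injective on `Q`, and its image is the span of the `E_{a,b}` with `b < a`. -/

open Set Function FreeLieAlgebra Submodule

theorem LieSubalgebra.lieSpan_le_span_of_lie_mem {R L : Type*} [CommRing R] [LieRing L]
    [LieAlgebra R L] {s t : Set L} (hs : s ⊆ span R t)
    (hst : ∀ x ∈ s, ∀ y ∈ t, ⁅x, y⁆ ∈ span R t) :
    (lieSpan R L s).toSubmodule ≤ span R t := by
  have lie_mem : ∀ x ∈ lieSpan R L s, ∀ m ∈ span R t, ⁅x, m⁆ ∈ span R t := by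
    intro x hx
    induction hx using lieSpan_induction with
    | mem x hx =>
      exact fun m hm => (map_span_le (LieAlgebra.ad R L x) t _).2 (hst x hx) ⟨m, hm, rfl⟩
    | zero => simp
    | add x y _ _ hx hy => intro m hm; rw [add_lie]; exact add_mem (hx m hm) (hy m hm)
    | smul r x _ hx => intro m hm; rw [smul_lie]; exact smul_mem _ r (hx m hm)
    | lie x y _ _ hx hy =>
      intro m hm; rw [lie_lie]; exact sub_mem (hx _ (hy m hm)) (hy _ (hx m hm))
  intro x hx
  induction hx using lieSpan_induction with
  | mem x hx => exact hs hx
  | zero => exact zero_mem _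
  | add x y _ _ hx hy => exact add_mem hx hy
  | smul r x _ hx => exact smul_mem _ r hx
  | lie x y hx _ _ hy => exact lie_mem x hx y hy

theorem FreeLieAlgebra.apply_mem_lieSpan {R X L : Type*} [CommRing R] [LieRing L]
    [LieAlgebra R L] (F : FreeLieAlgebra R X →ₗ⁅R⁆ L) (x : FreeLieAlgebra R X) :
    F x ∈ LieSubalgebra.lieSpan R L (range (F ∘ of R)) := by
  set K := LieSubalgebra.lieSpan R L (range (F ∘ of R))
  let G := lift R fun i => (⟨F (of R i), LieSubalgebra.subset_lieSpan (mem_range_self i)⟩ : K)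
  have hG : K.incl.comp G = F := hom_ext fun i => by simp [G]
  rw [← hG]
  exact (G x).2

def LieIdeal.mkQ {R L : Type*} [CommRing R] [LieRing L] [LieAlgebra R L] (I : LieIdeal R L) :
    L →ₗ⁅R⁆ L ⧸ I :=
  { (I : Submodule R L).mkQ with map_lie' := rfl }

theorem LieIdeal.ker_mkQ {R L : Type*} [CommRing R] [LieRing L] [LieAlgebra R L]
    (I : LieIdeal R L) : I.mkQ.ker = I :=
  LieSubmodule.ext _ _ fun _ => LieSubmodule.Quotient.mk_eq_zero'

section LieRing

variable {L : Type*} [LieRing L]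

theorem ad_sq_lie_eq_zero {x y z : L} (hxy : ⁅x, ⁅x, y⁆⁆ = 0)
    (hxz : ⁅x, z⁆ = 0) : ⁅x, ⁅x, ⁅y, z⁆⁆⁆ = 0 := by
  rw [leibniz_lie x y z, hxz, lie_zero, add_zero, leibniz_lie, hxy, zero_lie, hxz, lie_zero,
    add_zero]

theorem ad_lie_ad_eq_zero [IsAddTorsionFree L] {x y z : L}
    (hxy : ⁅x, ⁅x, y⁆⁆ = 0) (hyz : ⁅y, z⁆ = 0) (hxz : ⁅x, ⁅x, z⁆⁆ = 0) :
    ⁅x, ⁅y, ⁅x, z⁆⁆⁆ = 0 := by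
  have hyxz : ⁅y, ⁅x, z⁆⁆ = ⁅⁅y, x⁆, z⁆ := by rw [leibniz_lie, hyz, lie_zero, add_zero]
  refine self_eq_neg.1 ?_
  calc ⁅x, ⁅y, ⁅x, z⁆⁆⁆ = ⁅⁅y, x⁆, ⁅x, z⁆⁆ := by
        rw [hyxz, leibniz_lie, ← lie_skew y x, lie_neg, hxy, neg_zero, zero_lie, zero_add]
    _ = -⁅x, ⁅y, ⁅x, z⁆⁆⁆ := by rw [lie_lie, hxz, lie_zero, zero_sub]

structure SatisfiesSerreRels (f : ℤ → L) : Prop where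
  lie_lie_succ (i : ℤ) : ⁅f i, ⁅f i, f (i + 1)⁆⁆ = 0
  lie_lie_pred (i : ℤ) : ⁅f i, ⁅f i, f (i - 1)⁆⁆ = 0
  lie_of_one_lt_abs {i j : ℤ} : 1 < |i - j| → ⁅f i, f j⁆ = 0

/-- `rootVec f n b = ⁅f (b + n), ⁅…, ⁅f (b + 1), f b⁆…⁆⁆`; for `f i = E_{i+1,i}` it is
`E_{b+n+1,b}`. -/
def rootVec (f : ℤ → L) : ℕ → ℤ → L
  | 0, b => f b
  | n + 1, b => ⁅f (b + n + 1), rootVec f n b⁆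

theorem rootVec_succ_of_eq (f : ℤ → L) {n : ℕ} {b j : ℤ} (hj : j = b + n + 1) :
    rootVec f (n + 1) b = ⁅f j, rootVec f n b⁆ := by
  rw [hj, rootVec]

namespace SatisfiesSerreRels

variable {f : ℤ → L}

theorem lie_eq_zero (hf : SatisfiesSerreRels f) {i j : ℤ} (h : i + 1 < j ∨ j + 1 < i) :
    ⁅f i, f j⁆ = 0 :=
  hf.lie_of_one_lt_abs (lt_abs.2 (by omega))

theorem lie_rootVec_of_far (hf : SatisfiesSerreRels f) {i b : ℤ} {n : ℕ}
    (h : i < b - 1 ∨ b + n + 1 < i) : ⁅f i, rootVec f n b⁆ = 0 := by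
  induction n with
  | zero => exact hf.lie_eq_zero (by omega)
  | succ n ih =>
    push_cast at h
    rw [rootVec, leibniz_lie, hf.lie_eq_zero (by omega), zero_lie, ih (by omega), lie_zero,
      add_zero]

theorem lie_rootVec_pred (hf : SatisfiesSerreRels f) (n : ℕ) (b : ℤ) :
    ⁅f (b - 1), rootVec f n b⁆ = -rootVec f (n + 1) (b - 1) := by
  induction n with
  | zero => rw [rootVec_succ_of_eq f (j := b) (by omega), ← lie_skew]; rfl
  | succ n ih =>
    rw [rootVec, leibniz_lie, hf.lie_eq_zero (by omega), zero_lie, zero_add, ih, lie_neg,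
      ← rootVec_succ_of_eq f (by push_cast; ring)]

theorem lie_rootVec_top (hf : SatisfiesSerreRels f) (n : ℕ) (b : ℤ) :
    ⁅f (b + n + 1), rootVec f (n + 1) b⁆ = 0 := by
  rw [rootVec]
  rcases n with _ | n
  · simpa [rootVec] using hf.lie_lie_pred (b + 1)
  · rw [rootVec_succ_of_eq f (n := n) (j := b + (n + 1 : ℕ)) (by push_cast; ring)]
    exact ad_sq_lie_eq_zero
      (by simpa using hf.lie_lie_pred (b + (n + 1 : ℕ) + 1))
      (hf.lie_rootVec_of_far (by push_cast; omega))

theorem lie_rootVec_of_mem_Icc [IsAddTorsionFree L] (hf : SatisfiesSerreRels f) {i b : ℤ}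
    {n : ℕ} (hbi : b ≤ i) (hin : i ≤ b + n) : ⁅f i, rootVec f n b⁆ = 0 := by
  induction n generalizing i with
  | zero =>
    obtain rfl : i = b := by omega
    exact lie_self _
  | succ m ih =>
    push_cast at hin
    rcases (by omega : i = b + m + 1 ∨ i = b + m ∨ i < b + m) with rfl | rfl | hi
    · exact hf.lie_rootVec_top m b
    · rw [rootVec]
      rcases m with _ | k
      · change ⁅f (b + (0 : ℕ)), ⁅f (b + (0 : ℕ) + 1), f b⁆⁆ = 0
        rw [Nat.cast_zero, add_zero, ← lie_skew (f (b + 1)), lie_neg, hf.lie_lie_succ, neg_zero]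
      · rw [rootVec_succ_of_eq f (j := b + (k + 1 : ℕ)) (by push_cast; ring)]
        refine ad_lie_ad_eq_zero (hf.lie_lie_succ _)
          (hf.lie_rootVec_of_far (by push_cast; omega)) ?_
        rw [← rootVec_succ_of_eq f (by push_cast; ring)]
        exact ih hbi le_rfl
    · rw [rootVec, leibniz_lie, hf.lie_eq_zero (by omega), zero_lie, ih hbi (by omega),
        lie_zero, add_zero]

theorem lie_rootVec_mem_span (R : Type*) [CommRing R] [LieAlgebra R L]
    [IsAddTorsionFree L] (hf : SatisfiesSerreRels f) (i : ℤ) (n : ℕ) (b : ℤ) :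
    ⁅f i, rootVec f n b⁆ ∈ span R (range (uncurry (rootVec f))) := by
  rcases (by omega : i = b + n + 1 ∨ i = b - 1 ∨ (b ≤ i ∧ i ≤ b + n) ∨
      (i < b - 1 ∨ b + n + 1 < i)) with rfl | rfl | ⟨hbi, hin⟩ | hfar
  · exact subset_span ⟨(n + 1, b), rfl⟩
  · rw [hf.lie_rootVec_pred]
    exact neg_mem (subset_span ⟨(n + 1, b - 1), rfl⟩)
  · rw [hf.lie_rootVec_of_mem_Icc hbi hin]
    exact zero_mem _
  · rw [hf.lie_rootVec_of_far hfar]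
    exact zero_mem _

theorem lieSpan_le_span_rootVec {R : Type*} [CommRing R] [LieAlgebra R L] [IsAddTorsionFree L]
    (hf : SatisfiesSerreRels f) :
    (LieSubalgebra.lieSpan R L (range f)).toSubmodule ≤ span R (range (uncurry (rootVec f))) :=
  LieSubalgebra.lieSpan_le_span_of_lie_mem
    (range_subset_iff.2 fun i => subset_span ⟨(0, i), rfl⟩)
    (by rintro _ ⟨i, rfl⟩ _ ⟨⟨n, b⟩, rfl⟩; exact hf.lie_rootVec_mem_span R i n b)

end SatisfiesSerreRels

theorem LieHom.map_rootVec {R L L' : Type*} [CommRing R] [LieRing L] [LieAlgebra R L]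
    [LieRing L'] [LieAlgebra R L'] (F : L →ₗ⁅R⁆ L') (f : ℤ → L) (n : ℕ) (b : ℤ) :
    F (rootVec f n b) = rootVec (F ∘ f) n b := by
  induction n with
  | zero => rfl
  | succ n ih => rw [rootVec, rootVec, LieHom.map_lie, ih]; rfl

theorem satisfiesSerreRels_comp_of_iff {L : Type*} [LieRing L] [LieAlgebra ℚ L]
    (F : FreeLieAlgebra ℚ ℤ →ₗ⁅ℚ⁆ L) : SatisfiesSerreRels (F ∘ of ℚ) ↔ serreRels ⊆ F.ker := by
  constructor
  · rintro hF x ((⟨i, rfl⟩ | ⟨i, rfl⟩) | ⟨i, j, hij, rfl⟩) <;>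
      simp only [SetLike.mem_coe, LieHom.mem_ker, LieHom.map_lie]
    exacts [hF.lie_lie_succ i, hF.lie_lie_pred i, hF.lie_of_one_lt_abs hij]
  · intro h
    refine ⟨fun i => ?_, fun i => ?_, fun {i j} hij => ?_⟩
    · simpa [LieHom.map_lie] using h (Or.inl (Or.inl ⟨i, rfl⟩))
    · simpa [LieHom.map_lie] using h (Or.inl (Or.inr ⟨i, rfl⟩))
    · simpa [LieHom.map_lie] using h (Or.inr ⟨i, j, hij, rfl⟩)

theorem Eop_apply (a b : ℤ) (v : ℤ →₀ ℚ) : Eop a b v = Finsupp.single a (v b) := rfl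

theorem Eop_mul (a b c d : ℤ) : Eop a b * Eop c d = if b = c then Eop a d else 0 := by
  refine LinearMap.ext fun v => ?_
  by_cases h : b = c
  · subst h
    rw [if_pos rfl, Module.End.mul_apply, Eop_apply, Eop_apply, Finsupp.single_eq_same]
    rfl
  · rw [if_neg h, Module.End.mul_apply, Eop_apply, Eop_apply, Finsupp.single_eq_of_ne h,
      Finsupp.single_zero]
    rfl

theorem lie_Eop (a b c d : ℤ) :
    ⁅Eop a b, Eop c d⁆ = (if b = c then Eop a d else 0) - (if d = a then Eop c b else 0) := by
  rw [Ring.lie_def, Eop_mul, Eop_mul]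

theorem linearIndependent_Eop : LinearIndependent ℚ fun p : ℤ × ℤ => Eop p.1 p.2 := by
  let entry (p : ℤ × ℤ) : Module.Dual ℚ (Module.End ℚ (ℤ →₀ ℚ)) :=
    Finsupp.lapply p.1 ∘ₗ LinearMap.applyₗ (Finsupp.single p.2 1)
  have entry_Eop (p q : ℤ × ℤ) : entry p (Eop q.1 q.2) = if q = p then 1 else 0 := by
    simp [entry, Eop_apply, Finsupp.single_apply, Prod.ext_iff, ite_and, eq_comm]
  refine .of_pairwise_dual_eq_zero_one _ entry (fun p q hpq => ?_) (fun p => ?_)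
  · exact (entry_Eop p q).trans (if_neg hpq.symm)
  · rw [entry_Eop, if_pos rfl]

theorem satisfiesSerreRels_Eop : SatisfiesSerreRels fun i : ℤ => Eop (i + 1) i where
  lie_lie_succ i := by
    rw [lie_Eop, if_neg (by omega), if_pos rfl, zero_sub, lie_neg, lie_Eop, if_neg (by omega),
      if_neg (by omega), sub_zero, neg_zero]
  lie_lie_pred i := by
    rw [lie_Eop, if_pos (by omega), if_neg (by omega), sub_zero, lie_Eop, if_neg (by omega),
      if_neg (by omega), sub_zero]
  lie_of_one_lt_abs {i j} hij := by
    rw [lie_Eop, if_neg (by rw [lt_abs] at hij; omega), if_neg (by rw [lt_abs] at hij; omega),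
      sub_zero]

theorem rootVec_Eop (n : ℕ) (b : ℤ) :
    rootVec (fun i : ℤ => Eop (i + 1) i) n b = Eop (b + n + 1) b := by
  induction n with
  | zero => simp [rootVec]
  | succ n ih =>
    rw [rootVec, ih, lie_Eop, if_pos rfl, if_neg (by omega), sub_zero]
    congr 1
    push_cast
    ring

theorem phiSL_comp_of : phiSL ∘ of ℚ = fun i : ℤ => Eop (i + 1) i := of_comp_lift _

theorem phiSL_rootVec (n : ℕ) (b : ℤ) : phiSL (rootVec (of ℚ) n b) = Eop (b + n + 1) b := by
  rw [LieHom.map_rootVec, phiSL_comp_of, rootVec_Eop]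

theorem sup_span_rootVec_eq_top :
    (LieSubmodule.lieSpan ℚ (FreeLieAlgebra ℚ ℤ) serreRels).toSubmodule ⊔
      span ℚ (range (uncurry (rootVec (of ℚ)))) = ⊤ := by
  set I : LieIdeal ℚ (FreeLieAlgebra ℚ ℤ) := LieSubmodule.lieSpan ℚ _ serreRels
  have : IsAddTorsionFree (FreeLieAlgebra ℚ ℤ ⧸ I) := .of_module_rat _
  have hserre : SatisfiesSerreRels (LieIdeal.mkQ I ∘ of ℚ) :=
    (satisfiesSerreRels_comp_of_iff _).2 <|
      (LieIdeal.ker_mkQ I).symm ▸ LieSubmodule.subset_lieSpan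
  rw [← map_mkQ_eq_top, eq_top_iff]
  rintro y -
  obtain ⟨x, rfl⟩ := Submodule.mkQ_surjective _ y
  have hx := hserre.lieSpan_le_span_rootVec (apply_mem_lieSpan (LieIdeal.mkQ I) x)
  have hcomp : uncurry (rootVec (LieIdeal.mkQ I ∘ of ℚ)) =
      (LieSubmodule.toSubmodule I).mkQ ∘ uncurry (rootVec (of ℚ)) :=
    funext fun p => (LieHom.map_rootVec (LieIdeal.mkQ I) _ p.1 p.2).symm
  rwa [map_span, ← range_comp, ← hcomp]

theorem linearIndependent_phiSL_rootVec :
    LinearIndependent ℚ (phiSL.toLinearMap ∘ uncurry (rootVec (of ℚ))) := by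
  have hinj : Injective fun p : ℕ × ℤ => (p.2 + p.1 + 1, p.2) := fun p q h => by
    simp only [Prod.mk.injEq] at h
    ext <;> omega
  convert linearIndependent_Eop.comp _ hinj using 1
  exact funext fun p => phiSL_rootVec p.1 p.2

theorem ker_phiSL : phiSL.ker = LieSubmodule.lieSpan ℚ (FreeLieAlgebra ℚ ℤ) serreRels := by
  set I := LieSubmodule.lieSpan ℚ (FreeLieAlgebra ℚ ℤ) serreRels
  have hI : I ≤ phiSL.ker := LieSubmodule.lieSpan_le.2 <|
    (satisfiesSerreRels_comp_of_iff phiSL).1 (phiSL_comp_of ▸ satisfiesSerreRels_Eop)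
  have hdisj : Disjoint (span ℚ (range (uncurry (rootVec (of ℚ))))) phiSL.ker.toSubmodule := by
    rw [LieHom.ker_toSubmodule]
    exact range_ker_disjoint linearIndependent_phiSL_rootVec
  refine LieSubmodule.toSubmodule_injective ?_
  calc phiSL.ker.toSubmodule
      = (I.toSubmodule ⊔ span ℚ (range (uncurry (rootVec (of ℚ))))) ⊓ phiSL.ker.toSubmodule := by
        rw [sup_span_rootVec_eq_top, top_inf_eq]
    _ = I.toSubmodule := by
      rw [sup_inf_assoc_of_le _ ((LieSubmodule.toSubmodule_le_toSubmodule _ _).2 hI),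
        hdisj.eq_bot, sup_bot_eq]

theorem coe_range_phiSL : (phiSL.range : Set (Module.End ℚ (ℤ →₀ ℚ))) =
    span ℚ {x : Module.End ℚ (ℤ →₀ ℚ) | ∃ a b : ℤ, b < a ∧ x = Eop a b} := by
  have : IsAddTorsionFree (Module.End ℚ (ℤ →₀ ℚ)) := .of_module_rat _
  refine Set.Subset.antisymm ?_ fun x hx => (span_le (p := phiSL.range.toSubmodule)).2 ?_ hx
  · rintro _ ⟨x, rfl⟩
    refine span_mono ?_ (satisfiesSerreRels_Eop.lieSpan_le_span_rootVec
      (phiSL_comp_of ▸ apply_mem_lieSpan phiSL x))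
    rintro _ ⟨⟨n, b⟩, rfl⟩
    exact ⟨b + n + 1, b, by omega, rootVec_Eop n b⟩
  · rintro _ ⟨a, b, hba, rfl⟩
    refine ⟨rootVec (of ℚ) (a - b - 1).toNat b, ?_⟩
    refine (phiSL_rootVec _ b).trans ?_
    congr
    omega

/-- The homomorphism from the quotient of the free Lie algebra on `{f_i}_{i∈ℤ}` by
the Serre relations to the Lie algebra `L` of finitely supported strictly lower
triangular `ℤ×ℤ` matrices over `ℚ` (the span of the matrix units `E_{a,b}`, `a > b`),
determined by `f_i ↦ E_{i+1,i}`, is an isomorphism; equivalently, the lift `φ`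
has kernel exactly the Lie ideal generated by the Serre relations and range
exactly `L`. -/
theorem free_lie_quotient_iso_lowerTriangular :
    phiSL.ker = LieSubmodule.lieSpan ℚ (FreeLieAlgebra ℚ ℤ) serreRels ∧
    (phiSL.range : Set (Module.End ℚ (ℤ →₀ ℚ)))
      = ↑(Submodule.span ℚ {x : Module.End ℚ (ℤ →₀ ℚ) | ∃ a b : ℤ, b < a ∧ x = Eop a b}) :=
  ⟨ker_phiSL, coe_range_phiSL⟩
end LieRing
end

section
/- Let V be the free ℤ-module with basis {|λ⟩} indexed by all Young diagrams, and fix n ∈ ℤ. For each m ∈ ℤ define endomorphisms of V by: f̃_m|λ⟩ = −|λ ∪ {(i,j)}⟩ if λ has an addable cell (i,j) with n + j − i = m and f̃_m|λ⟩ = 0 otherwise; ẽ_m|λ⟩ = −|λ ∖ {(i,j)}⟩ if λ has a removable cell (i,j) with n + j − i = m and ẽ_m|λ⟩ = 0 otherwise; h̃_m|λ⟩ = |λ⟩ if λ has an addable cell (i,j) with n + j − i = m, h̃_m|λ⟩ = −|λ⟩ if λ has a removable cell (i,j) with n + j − i = m, and h̃_m|λ⟩ = 0 otherwise. Then for all i,j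 ∈ ℤ the following hold: [ẽ_i, f̃_j] = δ_{ij}·h̃_i; [h̃_i, h̃_j] = 0; [h̃_i, ẽ_j] = a_{ij}·ẽ_j and [h̃_i, f̃_j] = −a_{ij}·f̃_j, where a_{ij} = 2δ_{ij} − δ_{i,j+1} − δ_{i,j−1}; [ẽ_i, ẽ_j] = 0 and [f̃_i, f̃_j] = 0 whenever |i − j| ≥ 2; and [ẽ_i,[ẽ_i, ẽ_j]] = 0 and [f̃_i,[f̃_i, f̃_j]] = 0 whenever |i − j| = 1. In other words, these operators define a representation of the Lie algebra sl_∞ on V (the Fock space representation of highest weight ϖ_n). -/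
open scoped Classical

/-- A cell `p ∉ Y` is addable for the Young diagram `Y` if adding it yields a Young
diagram. -/
def Addable (Y : YoungDiagram) (p : ℕ × ℕ) : Prop :=
  p ∉ Y ∧ IsLowerSet (insert p (Y.cells : Set (ℕ × ℕ)))

/-- A cell `p ∈ Y` is removable for the Young diagram `Y` if removing it yields a
Young diagram. -/
def Removable (Y : YoungDiagram) (p : ℕ × ℕ) : Prop :=
  p ∈ Y ∧ IsLowerSet ((Y.cells : Set (ℕ × ℕ)) \ {p})

/-- Add a box to a Young diagram (returning the diagram unchanged if the result
would not be a Young diagram). -/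
noncomputable def addBox (Y : YoungDiagram) (p : ℕ × ℕ) : YoungDiagram :=
  if h : IsLowerSet (insert p (Y.cells : Set (ℕ × ℕ))) then
    ⟨insert p Y.cells, by rw [Finset.coe_insert]; exact h⟩
  else Y

/-- Remove a box from a Young diagram (returning the diagram unchanged if the result
would not be a Young diagram). -/
noncomputable def removeBox (Y : YoungDiagram) (p : ℕ × ℕ) : YoungDiagram :=
  if h : IsLowerSet ((Y.cells.erase p : Finset (ℕ × ℕ)) : Set (ℕ × ℕ)) then
    ⟨Y.cells.erase p, h⟩
  else Y

/-- The Fock space: the free `ℤ`-module with basis `|λ⟩` indexed by Young diagrams. -/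
abbrev FockV : Type := YoungDiagram →₀ ℤ

/-- `f̃_m |λ⟩ = −|λ ∪ B⟩` if `λ` has an addable cell `B = (i,j)` with `n + j − i = m`,
and `0` otherwise. -/
noncomputable def fT (n m : ℤ) : Module.End ℤ FockV :=
  Finsupp.lift FockV ℤ YoungDiagram fun Y =>
    if h : ∃ p : ℕ × ℕ, Addable Y p ∧ n + (p.2 : ℤ) - (p.1 : ℤ) = m then
      -Finsupp.single (addBox Y h.choose) (1 : ℤ)
    else 0

/-- `ẽ_m |λ⟩ = −|λ ∖ B⟩` if `λ` has a removable cell `B = (i,j)` with `n + j − i = m`,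
and `0` otherwise. -/
noncomputable def eT (n m : ℤ) : Module.End ℤ FockV :=
  Finsupp.lift FockV ℤ YoungDiagram fun Y =>
    if h : ∃ p : ℕ × ℕ, Removable Y p ∧ n + (p.2 : ℤ) - (p.1 : ℤ) = m then
      -Finsupp.single (removeBox Y h.choose) (1 : ℤ)
    else 0

/-- `h̃_m |λ⟩ = |λ⟩` if `λ` has an addable cell of the right content, `−|λ⟩` if it
has a removable cell of the right content, and `0` otherwise. -/
noncomputable def hT (n m : ℤ) : Module.End ℤ FockV :=
  Finsupp.lift FockV ℤ YoungDiagram fun Y =>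
    if ∃ p : ℕ × ℕ, Addable Y p ∧ n + (p.2 : ℤ) - (p.1 : ℤ) = m then
      Finsupp.single Y (1 : ℤ)
    else if ∃ p : ℕ × ℕ, Removable Y p ∧ n + (p.2 : ℤ) - (p.1 : ℤ) = m then
      -Finsupp.single Y (1 : ℤ)
    else 0

/-- The entries of the Cartan matrix of `sl_∞`:
`a_{ij} = 2δ_{ij} − δ_{i,j+1} − δ_{i,j−1}`. -/
def aCartan (i j : ℤ) : ℤ :=
  (if i = j then 2 else 0) - (if i = j + 1 then 1 else 0) - (if i = j - 1 then 1 else 0)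

lemma addable_iff {Y : YoungDiagram} {p : ℕ × ℕ} :
    Addable Y p ↔ p ∉ Y ∧ (∀ k, k + 1 = p.1 → (k, p.2) ∈ Y) ∧
      (∀ k, k + 1 = p.2 → (p.1, k) ∈ Y) := by
  obtain ⟨a, b⟩ := p
  constructor
  · rintro ⟨hp, hl⟩
    refine ⟨hp, ?_, ?_⟩
    · rintro k rfl
      have := @hl (k + 1, b) (k, b) (by simp [Prod.le_def]) (by simp)
      rcases this with h | h
      · rw [Prod.mk.injEq] at h; omega
      · simpa using h
    · rintro k rfl
      have := @hl (a, k + 1) (a, k) (by simp [Prod.le_def]) (by simp)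
      rcases this with h | h
      · rw [Prod.mk.injEq] at h; omega
      · simpa using h
  · rintro ⟨hp, h1, h2⟩
    refine ⟨hp, ?_⟩
    rintro ⟨y1, y2⟩ ⟨x1, x2⟩ hxy hy
    simp only [Set.mem_insert_iff, Finset.mem_coe, YoungDiagram.mem_cells] at hy ⊢
    obtain ⟨hx1, hx2⟩ : x1 ≤ y1 ∧ x2 ≤ y2 := Prod.mk_le_mk.mp hxy
    rcases hy with hy | hy
    · rw [Prod.mk.injEq] at hy
      obtain ⟨rfl, rfl⟩ := hy
      by_cases hxa : x1 = y1
      · by_cases hxb : x2 = y2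
        · left; simp [hxa, hxb]
        · right
          exact Y.up_left_mem (le_of_eq hxa) (by omega) (h2 (y2 - 1) (by omega))
      · right
        exact Y.up_left_mem (by omega) hx2 (h1 (y1 - 1) (by omega))
    · right; exact Y.up_left_mem hx1 hx2 hy

lemma removable_iff {Y : YoungDiagram} {p : ℕ × ℕ} :
    Removable Y p ↔ p ∈ Y ∧ (p.1 + 1, p.2) ∉ Y ∧ (p.1, p.2 + 1) ∉ Y := by
  obtain ⟨a, b⟩ := p
  constructor
  · rintro ⟨hp, hl⟩
    refine ⟨hp, fun h => ?_, fun h => ?_⟩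
    · have := @hl (a + 1, b) (a, b) (by simp [Prod.le_def])
        ⟨by simpa using h, by simp⟩
      exact this.2 rfl
    · have := @hl (a, b + 1) (a, b) (by simp [Prod.le_def])
        ⟨by simpa using h, by simp⟩
      exact this.2 rfl
  · rintro ⟨hp, h1, h2⟩
    refine ⟨hp, ?_⟩
    rintro ⟨y1, y2⟩ ⟨x1, x2⟩ hxy ⟨hy, hy2⟩
    obtain ⟨hx1, hx2⟩ : x1 ≤ y1 ∧ x2 ≤ y2 := Prod.mk_le_mk.mp hxy
    simp only [Finset.mem_coe, YoungDiagram.mem_cells] at hy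
    have hyne : (y1, y2) ≠ (a, b) := by simpa using hy2
    refine ⟨Y.up_left_mem hx1 hx2 hy, ?_⟩
    intro hx
    rw [Set.mem_singleton_iff, Prod.mk.injEq] at hx
    obtain ⟨rfl, rfl⟩ := hx
    rw [Ne, Prod.mk.injEq, not_and_or] at hyne
    rcases Nat.lt_or_ge x1 y1 with h | h
    · exact h1 (Y.up_left_mem h hx2 hy)
    · have he1 : x1 = y1 := by omega
      have he2 : x2 < y2 := by
        rcases hyne with h' | h' <;> omega
      exact h2 (Y.up_left_mem (by omega) he2 hy)

lemma mem_addBox {Y : YoungDiagram} {p : ℕ × ℕ} (h : Addable Y p) (x : ℕ × ℕ) :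
    x ∈ addBox Y p ↔ x = p ∨ x ∈ Y := by
  rw [addBox, dif_pos h.2]
  simp [YoungDiagram.mem_cells]

lemma mem_removeBox {Y : YoungDiagram} {q : ℕ × ℕ} (h : Removable Y q) (x : ℕ × ℕ) :
    x ∈ removeBox Y q ↔ x ≠ q ∧ x ∈ Y := by
  have h2 : IsLowerSet ((Y.cells.erase q : Finset (ℕ × ℕ)) : Set (ℕ × ℕ)) := by
    rw [Finset.coe_erase]; exact h.2
  rw [removeBox, dif_pos h2]
  simp [YoungDiagram.mem_cells, Finset.mem_erase]

lemma removeBox_addBox {Y : YoungDiagram} {p : ℕ × ℕ} (h : Addable Y p)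
    (h' : Removable (addBox Y p) p) : removeBox (addBox Y p) p = Y := by
  ext x
  simp only [YoungDiagram.mem_cells]
  rw [mem_removeBox h', mem_addBox h]
  constructor
  · rintro ⟨hx, rfl | hx2⟩
    · exact absurd rfl hx
    · exact hx2
  · intro hx
    exact ⟨fun hxp => h.1 (hxp ▸ hx), Or.inr hx⟩

lemma addBox_removeBox {Y : YoungDiagram} {q : ℕ × ℕ} (h : Removable Y q)
    (h' : Addable (removeBox Y q) q) : addBox (removeBox Y q) q = Y := by
  ext x
  simp only [YoungDiagram.mem_cells]
  rw [mem_addBox h', mem_removeBox h]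
  constructor
  · rintro (rfl | ⟨_, hx⟩)
    · exact h.1
    · exact hx
  · intro hx
    by_cases hxq : x = q
    · exact Or.inl hxq
    · exact Or.inr ⟨hxq, hx⟩

-- ## Uniqueness, exclusion, gaps

lemma uniq_rem {Y : YoungDiagram} {p q : ℕ × ℕ} (hp : Removable Y p) (hq : Removable Y q)
    (hc : (p.2 : ℤ) - p.1 = (q.2 : ℤ) - q.1) : p = q := by
  obtain ⟨p1, p2⟩ := p; obtain ⟨q1, q2⟩ := q
  rw [removable_iff] at hp hq
  simp only at hp hq hc ⊢
  rcases Nat.lt_trichotomy p1 q1 with h | h | h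
  · exact absurd (Y.up_left_mem (by omega) (by omega) hq.1) hp.2.1
  · have : p2 = q2 := by omega
    simp [h, this]
  · exact absurd (Y.up_left_mem (by omega) (by omega) hp.1) hq.2.1

lemma uniq_add {Y : YoungDiagram} {p q : ℕ × ℕ} (hp : Addable Y p) (hq : Addable Y q)
    (hc : (p.2 : ℤ) - p.1 = (q.2 : ℤ) - q.1) : p = q := by
  obtain ⟨p1, p2⟩ := p; obtain ⟨q1, q2⟩ := q
  rw [addable_iff] at hp hq
  simp only at hp hq hc ⊢
  rcases Nat.lt_trichotomy p1 q1 with h | h | h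
  · exact absurd (Y.up_left_mem (by omega) (by omega) (hq.2.1 (q1 - 1) (by omega))) hp.1
  · have : p2 = q2 := by omega
    simp [h, this]
  · exact absurd (Y.up_left_mem (by omega) (by omega) (hp.2.1 (p1 - 1) (by omega))) hq.1

lemma excl {Y : YoungDiagram} {p q : ℕ × ℕ} (hp : Addable Y p) (hq : Removable Y q)
    (hc : (p.2 : ℤ) - p.1 = (q.2 : ℤ) - q.1) : False := by
  obtain ⟨p1, p2⟩ := p; obtain ⟨q1, q2⟩ := q
  rw [addable_iff] at hp; rw [removable_iff] at hq
  simp only at hp hq hc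
  rcases le_or_gt p1 q1 with h | h
  · exact hp.1 (Y.up_left_mem h (by omega) hq.1)
  · rcases Nat.lt_or_ge (q1 + 1) p1 with h' | h'
    · exact hq.2.1 (Y.up_left_mem (by omega) (by omega) (hp.2.1 (p1 - 1) (by omega)))
    · -- p1 = q1 + 1, p2 = q2 + 1
      have : q1 + 1 = p1 := by omega
      have h2 := hp.2.2 (p2 - 1) (by omega)
      have : (p1, p2 - 1) = (q1 + 1, q2) := by
        rw [Prod.mk.injEq]; omega
      rw [this] at h2
      exact hq.2.1 h2

lemma gap_rem {Y : YoungDiagram} {p q : ℕ × ℕ} (hp : Removable Y p) (hq : Removable Y q)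
    (hc : (p.2 : ℤ) - p.1 = (q.2 : ℤ) - q.1 + 1) : False := by
  obtain ⟨p1, p2⟩ := p; obtain ⟨q1, q2⟩ := q
  rw [removable_iff] at hp hq
  simp only at hp hq hc
  rcases Nat.lt_trichotomy p1 q1 with h | h | h
  · exact hp.2.1 (Y.up_left_mem (by omega) (by omega) hq.1)
  · -- p1 = q1, p2 = q2 + 1
    have : (p1, p2) = (q1, q2 + 1) := by rw [Prod.mk.injEq]; omega
    exact hq.2.2 (this ▸ hp.1)
  · exact hq.2.2 (Y.up_left_mem (by omega) (by omega) hp.1)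

lemma gap_add {Y : YoungDiagram} {p q : ℕ × ℕ} (hp : Addable Y p) (hq : Addable Y q)
    (hc : (p.2 : ℤ) - p.1 = (q.2 : ℤ) - q.1 + 1) : False := by
  obtain ⟨p1, p2⟩ := p; obtain ⟨q1, q2⟩ := q
  rw [addable_iff] at hp hq
  simp only at hp hq hc
  rcases Nat.lt_trichotomy p1 q1 with h | h | h
  · exact hp.1 (Y.up_left_mem (by omega) (by omega) (hq.2.1 (q1 - 1) (by omega)))
  · -- p1 = q1, p2 = q2 + 1
    have h2 := hp.2.2 (p2 - 1) (by omega)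
    have : (p1, p2 - 1) = (q1, q2) := by rw [Prod.mk.injEq]; omega
    exact hq.1 (this ▸ h2)
  · exact hq.1 (Y.up_left_mem (by omega) (by omega) (hp.2.1 (p1 - 1) (by omega)))

-- ## Transfer lemmas

/-- Removability is inherited from `Y + p` back to `Y` for cells other than `p`. -/
lemma rem_of_rem_addBox {Y : YoungDiagram} {p w : ℕ × ℕ} (hp : Addable Y p)
    (hw : Removable (addBox Y p) w) (hne : w ≠ p) : Removable Y w := by
  rw [removable_iff] at hw ⊢
  rw [mem_addBox hp] at hw
  constructor
  · rcases hw.1 with h | h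
    · exact absurd h hne
    · exact h
  · exact ⟨fun h => hw.2.1 ((mem_addBox hp _).2 (Or.inr h)),
      fun h => hw.2.2 ((mem_addBox hp _).2 (Or.inr h))⟩

/-- `p` is removable in `Y + p`. -/
lemma rem_addBox_self {Y : YoungDiagram} {p : ℕ × ℕ} (hp : Addable Y p) :
    Removable (addBox Y p) p := by
  rw [removable_iff]
  rw [mem_addBox hp, mem_addBox hp, mem_addBox hp]
  refine ⟨Or.inl rfl, ?_, ?_⟩
  · rintro (h | h)
    · rw [Prod.mk.injEq] at h; omega
    · exact hp.1 (Y.up_left_mem (by omega) le_rfl h)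
  · rintro (h | h)
    · rw [Prod.mk.injEq] at h; omega
    · exact hp.1 (Y.up_left_mem le_rfl (by omega) h)

/-- `q` is addable in `Y - q`. -/
lemma add_removeBox_self {Y : YoungDiagram} {q : ℕ × ℕ} (hq : Removable Y q) :
    Addable (removeBox Y q) q := by
  rw [addable_iff]
  simp only [mem_removeBox hq]
  refine ⟨fun h => h.1 rfl, ?_, ?_⟩
  · rintro k hk
    have hqY := removable_iff.mp hq
    refine ⟨?_, Y.up_left_mem (by omega) le_rfl hq.1⟩
    intro h; rw [Prod.mk.injEq] at h; omega
  · rintro k hk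
    refine ⟨?_, Y.up_left_mem le_rfl (by omega) hq.1⟩
    intro h; rw [Prod.mk.injEq] at h; omega

/-- Removability is preserved when removing a different cell. -/
lemma rem_removeBox_of_rem {Y : YoungDiagram} {q w : ℕ × ℕ} (hq : Removable Y q)
    (hw : Removable Y w) (hne : w ≠ q) : Removable (removeBox Y q) w := by
  rw [removable_iff] at hw ⊢
  simp only [mem_removeBox hq]
  exact ⟨⟨hne, hw.1⟩, fun h => hw.2.1 h.2, fun h => hw.2.2 h.2⟩

/-- Addability is preserved when adding a different cell. -/
lemma add_addBox_of_add {Y : YoungDiagram} {p z : ℕ × ℕ} (hp : Addable Y p)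
    (hz : Addable Y z) (hne : z ≠ p) : Addable (addBox Y p) z := by
  rw [addable_iff] at hz ⊢
  simp only [mem_addBox hp]
  refine ⟨?_, fun k hk => Or.inr (hz.2.1 k hk), fun k hk => Or.inr (hz.2.2 k hk)⟩
  rintro (h | h)
  · exact hne h
  · exact hz.1 h

/-- Addability in `Y - q` comes from `Y` for cells other than `q`. -/
lemma add_of_add_removeBox {Y : YoungDiagram} {q z : ℕ × ℕ} (hq : Removable Y q)
    (hz : Addable (removeBox Y q) z) (hne : z ≠ q) : Addable Y z := by
  rw [addable_iff] at hz ⊢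
  simp only [mem_removeBox hq] at hz
  exact ⟨fun h => hz.1 ⟨hne, h⟩, fun k hk => (hz.2.1 k hk).2, fun k hk => (hz.2.2 k hk).2⟩

/-- A cell removable in `Y - q` is removable in `Y` or a lower neighbour of `q`. -/
lemma rem_removeBox_cases {Y : YoungDiagram} {q w : ℕ × ℕ} (hq : Removable Y q)
    (hw : Removable (removeBox Y q) w) :
    Removable Y w ∨ q = (w.1 + 1, w.2) ∨ q = (w.1, w.2 + 1) := by
  rw [removable_iff] at hw
  simp only [mem_removeBox hq] at hw
  by_cases h1 : q = (w.1 + 1, w.2)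
  · exact Or.inr (Or.inl h1)
  by_cases h2 : q = (w.1, w.2 + 1)
  · exact Or.inr (Or.inr h2)
  left
  rw [removable_iff]
  exact ⟨hw.1.2, fun h => hw.2.1 ⟨fun he => h1 he.symm, h⟩,
    fun h => hw.2.2 ⟨fun he => h2 he.symm, h⟩⟩

/-- A cell addable in `Y + p` is addable in `Y` or an upper neighbour of `p`. -/
lemma add_addBox_cases {Y : YoungDiagram} {p z : ℕ × ℕ} (hp : Addable Y p)
    (hz : Addable (addBox Y p) z) :
    Addable Y z ∨ z = (p.1 + 1, p.2) ∨ z = (p.1, p.2 + 1) := by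
  rw [addable_iff] at hz
  simp only [mem_addBox hp] at hz
  by_cases h1 : z = (p.1 + 1, p.2)
  · exact Or.inr (Or.inl h1)
  by_cases h2 : z = (p.1, p.2 + 1)
  · exact Or.inr (Or.inr h2)
  left
  rw [addable_iff]
  refine ⟨fun h => hz.1 (Or.inr h), fun k hk => ?_, fun k hk => ?_⟩
  · rcases hz.2.1 k hk with h | h
    · exfalso; apply h1
      obtain ⟨z1, z2⟩ := z; obtain ⟨p1, p2⟩ := p
      rw [Prod.mk.injEq] at h ⊢
      simp only at hk h
      omega
    · exact h
  · rcases hz.2.2 k hk with h | h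
    · exfalso; apply h2
      obtain ⟨z1, z2⟩ := z; obtain ⟨p1, p2⟩ := p
      rw [Prod.mk.injEq] at h ⊢
      simp only at hk h
      omega
    · exact h


-- ## The key interlacing lemmas

lemma Kplus {Y : YoungDiagram} {q : ℕ × ℕ} (hq : Removable Y q) :
    (∃ z : ℕ × ℕ, Addable Y z ∧ (z.2 : ℤ) - z.1 = (q.2 : ℤ) - q.1 + 1) ↔
      ¬∃ w : ℕ × ℕ, Removable (removeBox Y q) w ∧
        (w.2 : ℤ) - w.1 = (q.2 : ℤ) - q.1 + 1 := by
  obtain ⟨q1, q2⟩ := q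
  constructor
  · rintro ⟨⟨z1, z2⟩, hz, hcz⟩ ⟨⟨w1, w2⟩, hw, hcw⟩
    rcases rem_removeBox_cases hq hw with hwY | hqe | hqe
    · exact gap_rem hwY hq (by omega)
    · rw [Prod.mk.injEq] at hqe
      by_cases hze : (z1, z2) = (q1, q2 + 1)
      · rw [Prod.mk.injEq] at hze
        have hzp := addable_iff.mp hz
        have hrow : (w1, q2 + 1) ∈ Y := by
          have := hzp.2.1 w1 (by simp; omega)
          have he : (w1, z2) = (w1, q2 + 1) := by rw [Prod.mk.injEq]; omega
          rwa [he] at this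
        have hwr := removable_iff.mp hw
        apply hwr.2.2
        rw [mem_removeBox hq]
        refine ⟨by rw [Ne, Prod.mk.injEq]; omega, ?_⟩
        have he : ((w1, w2).1, (w1, w2).2 + 1) = (w1, q2 + 1) := by
          rw [Prod.mk.injEq]; omega
        rwa [he]
      · have hzq : Addable (removeBox Y (q1, q2)) (z1, z2) := by
          rw [addable_iff] at hz ⊢
          simp only [mem_removeBox hq]
          refine ⟨fun h => hz.1 h.2, fun k hk => ⟨?_, hz.2.1 k hk⟩,
            fun k hk => ⟨?_, hz.2.2 k hk⟩⟩
          · rw [Ne, Prod.mk.injEq]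
            intro hcon
            omega
          · rw [Ne, Prod.mk.injEq]
            intro hcon
            apply hze
            rw [Prod.mk.injEq]
            omega
        exact excl hzq hw (by omega)
    · rw [Prod.mk.injEq] at hqe
      omega
  · intro hnw
    by_contra hnz
    have hqr := removable_iff.mp hq
    by_cases hrow : ∀ k, k + 1 = q1 → (k, q2 + 1) ∈ Y
    · apply hnz
      refine ⟨(q1, q2 + 1), ?_, by omega⟩
      rw [addable_iff]
      refine ⟨hqr.2.2, hrow, fun k hk => ?_⟩
      have he : ((q1, q2 + 1).1, k) = (q1, q2) := by rw [Prod.mk.injEq]; simp only at hk; omega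
      rw [he]; exact hqr.1
    · push_neg at hrow
      obtain ⟨k, hk, hkY⟩ := hrow
      apply hnw
      refine ⟨(k, q2), ?_, by omega⟩
      rw [removable_iff]
      simp only [mem_removeBox hq]
      refine ⟨⟨by rw [Ne, Prod.mk.injEq]; omega,
        Y.up_left_mem (by omega) le_rfl hqr.1⟩, ?_, ?_⟩
      · rintro ⟨hne, hmem⟩
        apply hne
        rw [Prod.mk.injEq]; omega
      · rintro ⟨hne, hmem⟩
        exact hkY hmem

lemma Kminus {Y : YoungDiagram} {q : ℕ × ℕ} (hq : Removable Y q) :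
    (∃ z : ℕ × ℕ, Addable Y z ∧ (z.2 : ℤ) - z.1 = (q.2 : ℤ) - q.1 - 1) ↔
      ¬∃ w : ℕ × ℕ, Removable (removeBox Y q) w ∧
        (w.2 : ℤ) - w.1 = (q.2 : ℤ) - q.1 - 1 := by
  obtain ⟨q1, q2⟩ := q
  constructor
  · rintro ⟨⟨z1, z2⟩, hz, hcz⟩ ⟨⟨w1, w2⟩, hw, hcw⟩
    rcases rem_removeBox_cases hq hw with hwY | hqe | hqe
    · exact gap_rem hq hwY (by omega)
    · rw [Prod.mk.injEq] at hqe
      omega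
    · rw [Prod.mk.injEq] at hqe
      by_cases hze : (z1, z2) = (q1 + 1, q2)
      · rw [Prod.mk.injEq] at hze
        have hzp := addable_iff.mp hz
        have hcol : (q1 + 1, w2) ∈ Y := by
          have := hzp.2.2 w2 (by simp; omega)
          have he : ((z1, z2).1, w2) = (q1 + 1, w2) := by rw [Prod.mk.injEq]; omega
          rwa [he] at this
        have hwr := removable_iff.mp hw
        apply hwr.2.1
        rw [mem_removeBox hq]
        refine ⟨by rw [Ne, Prod.mk.injEq]; omega, ?_⟩
        have he : ((w1, w2).1 + 1, (w1, w2).2) = (q1 + 1, w2) := by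
          rw [Prod.mk.injEq]; omega
        rwa [he]
      · have hzq : Addable (removeBox Y (q1, q2)) (z1, z2) := by
          rw [addable_iff] at hz ⊢
          simp only [mem_removeBox hq]
          refine ⟨fun h => hz.1 h.2, fun k hk => ⟨?_, hz.2.1 k hk⟩,
            fun k hk => ⟨?_, hz.2.2 k hk⟩⟩
          · rw [Ne, Prod.mk.injEq]
            intro hcon
            apply hze
            rw [Prod.mk.injEq]
            omega
          · rw [Ne, Prod.mk.injEq]
            intro hcon
            omega
        exact excl hzq hw (by omega)
  · intro hnw
    by_contra hnz
    have hqr := removable_iff.mp hq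
    by_cases hcol : ∀ k, k + 1 = q2 → (q1 + 1, k) ∈ Y
    · apply hnz
      refine ⟨(q1 + 1, q2), ?_, by omega⟩
      rw [addable_iff]
      refine ⟨hqr.2.1, fun k hk => ?_, hcol⟩
      have he : (k, (q1 + 1, q2).2) = (q1, q2) := by rw [Prod.mk.injEq]; simp only at hk; omega
      rw [he]; exact hqr.1
    · push_neg at hcol
      obtain ⟨k, hk, hkY⟩ := hcol
      apply hnw
      refine ⟨(q1, k), ?_, by omega⟩
      rw [removable_iff]
      simp only [mem_removeBox hq]
      refine ⟨⟨by rw [Ne, Prod.mk.injEq]; omega,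
        Y.up_left_mem le_rfl (by omega) hqr.1⟩, ?_, ?_⟩
      · rintro ⟨hne, hmem⟩
        exact hkY hmem
      · rintro ⟨hne, hmem⟩
        apply hne
        rw [Prod.mk.injEq]; omega

-- ## Serre relation cores

lemma emid_core {Y : YoungDiagram} {q w : ℕ × ℕ} (hq : Removable Y q)
    (hw : Removable (removeBox Y q) w)
    (hd : (w.2 : ℤ) - w.1 = (q.2 : ℤ) - q.1 + 1 ∨
          (w.2 : ℤ) - w.1 = (q.2 : ℤ) - q.1 - 1) :
    ¬∃ z : ℕ × ℕ, Removable (removeBox (removeBox Y q) w) z ∧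
      (z.2 : ℤ) - z.1 = (q.2 : ℤ) - q.1 := by
  rintro ⟨⟨z1, z2⟩, hz, hcz⟩
  obtain ⟨q1, q2⟩ := q; obtain ⟨w1, w2⟩ := w
  have hzmem := (removable_iff.mp hz).1
  rw [mem_removeBox hw] at hzmem
  have hzw := hzmem.1
  have hzmem2 := hzmem.2
  rw [mem_removeBox hq] at hzmem2
  have hzq := hzmem2.1
  rw [Ne, Prod.mk.injEq] at hzw hzq
  have hqw : (q1, q2) = (w1 + 1, w2) ∨ (q1, q2) = (w1, w2 + 1) := by
    rcases rem_removeBox_cases hq hw with hwY | h | h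
    · exfalso
      rcases hd with hd | hd
      · exact gap_rem hwY hq (by omega)
      · exact gap_rem hq hwY (by omega)
    · exact Or.inl h
    · exact Or.inr h
  rcases rem_removeBox_cases hw hz with hzY' | h | h
  · rcases rem_removeBox_cases hq hzY' with hzY | h | h
    · have := uniq_rem hzY hq (by omega)
      rw [Prod.mk.injEq] at this; omega
    · rw [Prod.mk.injEq] at h; omega
    · rw [Prod.mk.injEq] at h; omega
  · -- w = (z1 + 1, z2)
    rw [Prod.mk.injEq] at h
    rcases hqw with hh | hh <;> rw [Prod.mk.injEq] at hh
    · omega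
    · -- q = (z1+1, z2+1), w = (z1+1, z2); neighbour (z1, z2+1) ∈ Y leads to contra
      have hzr := removable_iff.mp hz
      apply hzr.2.2
      rw [mem_removeBox hw]
      refine ⟨by rw [Ne, Prod.mk.injEq]; omega, ?_⟩
      rw [mem_removeBox hq]
      refine ⟨by rw [Ne, Prod.mk.injEq]; omega, ?_⟩
      exact Y.up_left_mem (by omega) (by omega) (removable_iff.mp hq).1
  · -- w = (z1, z2 + 1)
    rw [Prod.mk.injEq] at h
    rcases hqw with hh | hh <;> rw [Prod.mk.injEq] at hh
    · -- q = (z1+1, z2+1), w = (z1, z2+1); neighbour (z1+1, z2) ∈ Y leads to contra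
      have hzr := removable_iff.mp hz
      apply hzr.2.1
      rw [mem_removeBox hw]
      refine ⟨by rw [Ne, Prod.mk.injEq]; omega, ?_⟩
      rw [mem_removeBox hq]
      refine ⟨by rw [Ne, Prod.mk.injEq]; omega, ?_⟩
      exact Y.up_left_mem (by omega) (by omega) (removable_iff.mp hq).1
    · omega

lemma fmid_core {Y : YoungDiagram} {p w : ℕ × ℕ} (hp : Addable Y p)
    (hw : Addable (addBox Y p) w)
    (hd : (w.2 : ℤ) - w.1 = (p.2 : ℤ) - p.1 + 1 ∨
          (w.2 : ℤ) - w.1 = (p.2 : ℤ) - p.1 - 1) :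
    ¬∃ z : ℕ × ℕ, Addable (addBox (addBox Y p) w) z ∧
      (z.2 : ℤ) - z.1 = (p.2 : ℤ) - p.1 := by
  rintro ⟨⟨z1, z2⟩, hz, hcz⟩
  obtain ⟨p1, p2⟩ := p; obtain ⟨w1, w2⟩ := w
  have hznotmem := (addable_iff.mp hz).1
  have hpmem : (p1, p2) ∈ addBox (addBox Y (p1, p2)) (w1, w2) := by
    rw [mem_addBox hw]
    exact Or.inr ((mem_addBox hp _).2 (Or.inl rfl))
  have hzp : (z1, z2) ≠ (p1, p2) := fun he => hznotmem (he ▸ hpmem)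
  rw [Ne, Prod.mk.injEq] at hzp
  have hpw : (w1, w2) = (p1 + 1, p2) ∨ (w1, w2) = (p1, p2 + 1) := by
    rcases add_addBox_cases hp hw with hwY | h | h
    · exfalso
      rcases hd with hd | hd
      · exact gap_add hwY hp (by omega)
      · exact gap_add hp hwY (by omega)
    · exact Or.inl h
    · exact Or.inr h
  rcases add_addBox_cases hw hz with hzY' | h | h
  · rcases add_addBox_cases hp hzY' with hzY | h | h
    · have := uniq_add hzY hp (by omega)
      rw [Prod.mk.injEq] at this; omega
    · rw [Prod.mk.injEq] at h; omega
    · rw [Prod.mk.injEq] at h; omega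
  · -- z = (w1 + 1, w2): ct z = ct w - 1 = ct p so ct w = ct p + 1, w = (p1, p2+1)
    rw [Prod.mk.injEq] at h
    rcases hpw with hh | hh <;> rw [Prod.mk.injEq] at hh
    · omega
    · -- w = (p1, p2+1), z = (p1+1, p2+1): prereq (p1+1, p2) must be in Y+p+w
      have hzp' := addable_iff.mp hz
      have hpre := hzp'.2.2 p2 (by simp; omega)
      rw [mem_addBox hw] at hpre
      rcases hpre with hcon | hpre
      · rw [Prod.mk.injEq] at hcon; omega
      rw [mem_addBox hp] at hpre
      rcases hpre with hcon | hpre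
      · rw [Prod.mk.injEq] at hcon; omega
      · -- ((z1,z2).1, p2) = (p1+1, p2) ∈ Y ⇒ (p1,p2) ∈ Y contra
        exact (addable_iff.mp hp).1 (Y.up_left_mem (by omega) le_rfl hpre)
  · -- z = (w1, w2 + 1): ct w = ct p - 1, w = (p1+1, p2)
    rw [Prod.mk.injEq] at h
    rcases hpw with hh | hh <;> rw [Prod.mk.injEq] at hh
    · -- w = (p1+1, p2), z = (p1+1, p2+1): prereq (p1, p2+1) ∈ Y+p+w ⇒ contra
      have hzp' := addable_iff.mp hz
      have hpre := hzp'.2.1 p1 (by simp; omega)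
      rw [mem_addBox hw] at hpre
      rcases hpre with hcon | hpre
      · rw [Prod.mk.injEq] at hcon; omega
      rw [mem_addBox hp] at hpre
      rcases hpre with hcon | hpre
      · rw [Prod.mk.injEq] at hcon; omega
      · exact (addable_iff.mp hp).1 (Y.up_left_mem le_rfl (by omega) hpre)
    · omega


-- ## more transfer lemmas

lemma add_removeBox_of_add {Y : YoungDiagram} {q z : ℕ × ℕ} (hq : Removable Y q)
    (hz : Addable Y z) (h1 : ∀ k, k + 1 = z.1 → (k, z.2) ≠ q)
    (h2 : ∀ k, k + 1 = z.2 → (z.1, k) ≠ q) : Addable (removeBox Y q) z := by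
  rw [addable_iff] at hz ⊢
  simp only [mem_removeBox hq]
  exact ⟨fun h => hz.1 h.2, fun k hk => ⟨h1 k hk, hz.2.1 k hk⟩,
    fun k hk => ⟨h2 k hk, hz.2.2 k hk⟩⟩

lemma rem_addBox_of_rem {Y : YoungDiagram} {p q : ℕ × ℕ} (hp : Addable Y p)
    (hq : Removable Y q) (h1 : (q.1 + 1, q.2) ≠ p) (h2 : (q.1, q.2 + 1) ≠ p) :
    Removable (addBox Y p) q := by
  rw [removable_iff] at hq ⊢
  simp only [mem_addBox hp]
  refine ⟨Or.inr hq.1, ?_, ?_⟩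
  · rintro (h | h)
    · exact h1 h
    · exact hq.2.1 h
  · rintro (h | h)
    · exact h2 h
    · exact hq.2.2 h


-- ## Operator-level basics

lemma end_ext {f g : Module.End ℤ FockV}
    (h : ∀ Y, f (Finsupp.single Y 1) = g (Finsupp.single Y 1)) : f = g := by
  apply Finsupp.lhom_ext
  intro Y b
  have hb : (Finsupp.single Y b : FockV) = b • Finsupp.single Y 1 := by
    rw [Finsupp.smul_single, smul_eq_mul, mul_one]
  rw [hb, map_smul, map_smul, h]

lemma eT_single (n m : ℤ) (Y : YoungDiagram) :
    eT n m (Finsupp.single Y 1) =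
      if h : ∃ p : ℕ × ℕ, Removable Y p ∧ n + (p.2 : ℤ) - (p.1 : ℤ) = m then
        -Finsupp.single (removeBox Y h.choose) (1 : ℤ)
      else 0 := by
  rw [eT, Finsupp.lift_apply, Finsupp.sum_single_index (by rw [zero_smul]), one_smul]

lemma fT_single (n m : ℤ) (Y : YoungDiagram) :
    fT n m (Finsupp.single Y 1) =
      if h : ∃ p : ℕ × ℕ, Addable Y p ∧ n + (p.2 : ℤ) - (p.1 : ℤ) = m then
        -Finsupp.single (addBox Y h.choose) (1 : ℤ)
      else 0 := by
  rw [fT, Finsupp.lift_apply, Finsupp.sum_single_index (by rw [zero_smul]), one_smul]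

lemma eT_single_of {n m : ℤ} {Y : YoungDiagram} {q : ℕ × ℕ} (hq : Removable Y q)
    (hm : n + (q.2 : ℤ) - q.1 = m) :
    eT n m (Finsupp.single Y 1) = -Finsupp.single (removeBox Y q) 1 := by
  have hex : ∃ p : ℕ × ℕ, Removable Y p ∧ n + (p.2 : ℤ) - (p.1 : ℤ) = m := ⟨q, hq, hm⟩
  rw [eT_single, dif_pos hex]
  have hch : hex.choose = q := by
    refine uniq_rem hex.choose_spec.1 hq ?_
    have := hex.choose_spec.2
    omega
  rw [hch]

lemma fT_single_of {n m : ℤ} {Y : YoungDiagram} {p : ℕ × ℕ} (hp : Addable Y p)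
    (hm : n + (p.2 : ℤ) - p.1 = m) :
    fT n m (Finsupp.single Y 1) = -Finsupp.single (addBox Y p) 1 := by
  have hex : ∃ z : ℕ × ℕ, Addable Y z ∧ n + (z.2 : ℤ) - (z.1 : ℤ) = m := ⟨p, hp, hm⟩
  rw [fT_single, dif_pos hex]
  have hch : hex.choose = p := by
    refine uniq_add hex.choose_spec.1 hp ?_
    have := hex.choose_spec.2
    omega
  rw [hch]

lemma eT_single_zero {n m : ℤ} {Y : YoungDiagram}
    (h : ¬∃ p : ℕ × ℕ, Removable Y p ∧ n + (p.2 : ℤ) - (p.1 : ℤ) = m) :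
    eT n m (Finsupp.single Y 1) = 0 := by
  rw [eT_single, dif_neg h]

lemma fT_single_zero {n m : ℤ} {Y : YoungDiagram}
    (h : ¬∃ p : ℕ × ℕ, Addable Y p ∧ n + (p.2 : ℤ) - (p.1 : ℤ) = m) :
    fT n m (Finsupp.single Y 1) = 0 := by
  rw [fT_single, dif_neg h]

noncomputable def sig (n m : ℤ) (Y : YoungDiagram) : ℤ :=
  if ∃ p : ℕ × ℕ, Addable Y p ∧ n + (p.2 : ℤ) - (p.1 : ℤ) = m then 1
  else if ∃ p : ℕ × ℕ, Removable Y p ∧ n + (p.2 : ℤ) - (p.1 : ℤ) = m then -1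
  else 0

lemma hT_single (n m : ℤ) (Y : YoungDiagram) :
    hT n m (Finsupp.single Y 1) = sig n m Y • Finsupp.single Y 1 := by
  rw [hT, Finsupp.lift_apply, Finsupp.sum_single_index (by rw [zero_smul]), one_smul, sig]
  split_ifs <;> simp

-- ## sig computation

lemma sig_removeBox {n i j : ℤ} {Y : YoungDiagram} {q : ℕ × ℕ} (hq : Removable Y q)
    (hj : n + (q.2 : ℤ) - q.1 = j) :
    sig n i (removeBox Y q) - sig n i Y = aCartan i j := by
  have haq : aCartan i j = (if i = j then 2 else 0) - (if i = j + 1 then 1 else 0) -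
      (if i = j - 1 then 1 else 0) := rfl
  rcases eq_or_ne i j with rfl | hij
  · -- sig Y = -1, sig (Y - q) = 1
    have h1 : sig n i Y = -1 := by
      rw [sig, if_neg, if_pos ⟨q, hq, hj⟩]
      rintro ⟨z, hz, hc⟩
      exact excl hz hq (by omega)
    have h2 : sig n i (removeBox Y q) = 1 := by
      rw [sig, if_pos ⟨q, add_removeBox_self hq, hj⟩]
    rw [h1, h2, haq]
    split_ifs <;> omega
  rcases eq_or_ne i (j + 1) with rfl | hij1
  · -- use Kplus
    have hK := Kplus hq
    have hA : (∃ z : ℕ × ℕ, Addable Y z ∧ n + (z.2 : ℤ) - z.1 = j + 1) ↔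
        (∃ z : ℕ × ℕ, Addable Y z ∧ (z.2 : ℤ) - z.1 = (q.2 : ℤ) - q.1 + 1) := by
      constructor
      · rintro ⟨z, hz, hc⟩; exact ⟨z, hz, by omega⟩
      · rintro ⟨z, hz, hc⟩; exact ⟨z, hz, by omega⟩
    have hR : (∃ w : ℕ × ℕ, Removable (removeBox Y q) w ∧ n + (w.2 : ℤ) - w.1 = j + 1) ↔
        (∃ w : ℕ × ℕ, Removable (removeBox Y q) w ∧
          (w.2 : ℤ) - w.1 = (q.2 : ℤ) - q.1 + 1) := by
      constructor
      · rintro ⟨w, hw, hc⟩; exact ⟨w, hw, by omega⟩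
      · rintro ⟨w, hw, hc⟩; exact ⟨w, hw, by omega⟩
    have hnRY : ¬∃ w : ℕ × ℕ, Removable Y w ∧ n + (w.2 : ℤ) - w.1 = j + 1 := by
      rintro ⟨w, hw, hc⟩
      exact gap_rem hw hq (by omega)
    have hnA' : ¬∃ z : ℕ × ℕ, Addable (removeBox Y q) z ∧ n + (z.2 : ℤ) - z.1 = j + 1 := by
      rintro ⟨z, hz, hc⟩
      exact gap_add hz (add_removeBox_self hq) (by omega)
    by_cases hA1 : ∃ z : ℕ × ℕ, Addable Y z ∧ n + (z.2 : ℤ) - z.1 = j + 1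
    · have h1 : sig n (j+1) Y = 1 := by rw [sig, if_pos hA1]
      have h2 : sig n (j+1) (removeBox Y q) = 0 := by
        rw [sig, if_neg hnA', if_neg]
        rw [hR]
        exact hK.mp (hA.mp hA1)
      rw [h1, h2, haq]
      split_ifs <;> omega
    · have h1 : sig n (j+1) Y = 0 := by rw [sig, if_neg hA1, if_neg hnRY]
      have h2 : sig n (j+1) (removeBox Y q) = -1 := by
        rw [sig, if_neg hnA', if_pos]
        rw [hR]
        by_contra hcon
        exact hA1 (hA.mpr (hK.mpr hcon))
      rw [h1, h2, haq]
      split_ifs <;> omega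
  rcases eq_or_ne i (j - 1) with rfl | hij2
  · -- use Kminus
    have hK := Kminus hq
    have hA : (∃ z : ℕ × ℕ, Addable Y z ∧ n + (z.2 : ℤ) - z.1 = j - 1) ↔
        (∃ z : ℕ × ℕ, Addable Y z ∧ (z.2 : ℤ) - z.1 = (q.2 : ℤ) - q.1 - 1) := by
      constructor
      · rintro ⟨z, hz, hc⟩; exact ⟨z, hz, by omega⟩
      · rintro ⟨z, hz, hc⟩; exact ⟨z, hz, by omega⟩
    have hR : (∃ w : ℕ × ℕ, Removable (removeBox Y q) w ∧ n + (w.2 : ℤ) - w.1 = j - 1) ↔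
        (∃ w : ℕ × ℕ, Removable (removeBox Y q) w ∧
          (w.2 : ℤ) - w.1 = (q.2 : ℤ) - q.1 - 1) := by
      constructor
      · rintro ⟨w, hw, hc⟩; exact ⟨w, hw, by omega⟩
      · rintro ⟨w, hw, hc⟩; exact ⟨w, hw, by omega⟩
    have hnRY : ¬∃ w : ℕ × ℕ, Removable Y w ∧ n + (w.2 : ℤ) - w.1 = j - 1 := by
      rintro ⟨w, hw, hc⟩
      exact gap_rem hq hw (by omega)
    have hnA' : ¬∃ z : ℕ × ℕ, Addable (removeBox Y q) z ∧ n + (z.2 : ℤ) - z.1 = j - 1 := by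
      rintro ⟨z, hz, hc⟩
      exact gap_add (add_removeBox_self hq) hz (by omega)
    by_cases hA1 : ∃ z : ℕ × ℕ, Addable Y z ∧ n + (z.2 : ℤ) - z.1 = j - 1
    · have h1 : sig n (j-1) Y = 1 := by rw [sig, if_pos hA1]
      have h2 : sig n (j-1) (removeBox Y q) = 0 := by
        rw [sig, if_neg hnA', if_neg]
        rw [hR]
        exact hK.mp (hA.mp hA1)
      rw [h1, h2, haq]
      split_ifs <;> omega
    · have h1 : sig n (j-1) Y = 0 := by rw [sig, if_neg hA1, if_neg hnRY]
      have h2 : sig n (j-1) (removeBox Y q) = -1 := by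
        rw [sig, if_neg hnA', if_pos]
        rw [hR]
        by_contra hcon
        exact hA1 (hA.mpr (hK.mpr hcon))
      rw [h1, h2, haq]
      split_ifs <;> omega
  · -- |i - j| ≥ 2 : sig unchanged
    have hIffA : (∃ z : ℕ × ℕ, Addable (removeBox Y q) z ∧ n + (z.2 : ℤ) - z.1 = i) ↔
        (∃ z : ℕ × ℕ, Addable Y z ∧ n + (z.2 : ℤ) - z.1 = i) := by
      constructor
      · rintro ⟨z, hz, hc⟩
        refine ⟨z, add_of_add_removeBox hq hz ?_, hc⟩
        intro he
        subst he
        omega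
      · rintro ⟨z, hz, hc⟩
        refine ⟨z, add_removeBox_of_add hq hz ?_ ?_, hc⟩
        · intro k hk he
          obtain ⟨z1, z2⟩ := z; obtain ⟨q1, q2⟩ := q
          rw [Prod.mk.injEq] at he
          simp only at hk hc hj
          omega
        · intro k hk he
          obtain ⟨z1, z2⟩ := z; obtain ⟨q1, q2⟩ := q
          rw [Prod.mk.injEq] at he
          simp only at hk hc hj
          omega
    have hIffR : (∃ w : ℕ × ℕ, Removable (removeBox Y q) w ∧ n + (w.2 : ℤ) - w.1 = i) ↔
        (∃ w : ℕ × ℕ, Removable Y w ∧ n + (w.2 : ℤ) - w.1 = i) := by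
      constructor
      · rintro ⟨w, hw, hc⟩
        rcases rem_removeBox_cases hq hw with hwY | h | h
        · exact ⟨w, hwY, hc⟩
        · exfalso
          obtain ⟨w1, w2⟩ := w; obtain ⟨q1, q2⟩ := q
          rw [Prod.mk.injEq] at h
          simp only at hc hj
          omega
        · exfalso
          obtain ⟨w1, w2⟩ := w; obtain ⟨q1, q2⟩ := q
          rw [Prod.mk.injEq] at h
          simp only at hc hj
          omega
      · rintro ⟨w, hw, hc⟩
        refine ⟨w, rem_removeBox_of_rem hq hw ?_, hc⟩
        intro he
        subst he
        omega
    have hs : sig n i (removeBox Y q) = sig n i Y := by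
      rw [sig, sig, if_congr hIffA rfl (if_congr hIffR rfl rfl)]
    rw [hs, sub_self, haq]
    rw [if_neg hij, if_neg hij1, if_neg hij2]
    omega

lemma sig_addBox {n i j : ℤ} {Y : YoungDiagram} {p : ℕ × ℕ} (hp : Addable Y p)
    (hj : n + (p.2 : ℤ) - p.1 = j) :
    sig n i Y - sig n i (addBox Y p) = aCartan i j := by
  have h1 := sig_removeBox (i := i) (rem_addBox_self hp) hj
  rwa [removeBox_addBox hp (rem_addBox_self hp)] at h1


-- ## The six families of relations

lemma part_ef (n i j : ℤ) :
    eT n i * fT n j - fT n j * eT n i = if i = j then hT n i else 0 := by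
  rcases eq_or_ne i j with rfl | hij
  · rw [if_pos rfl]
    apply end_ext
    intro Y
    rw [LinearMap.sub_apply, Module.End.mul_apply, Module.End.mul_apply]
    by_cases hA : ∃ p : ℕ × ℕ, Addable Y p ∧ n + (p.2 : ℤ) - (p.1 : ℤ) = i
    · obtain ⟨p, hp, hpc⟩ := hA
      have hnR : ¬∃ q : ℕ × ℕ, Removable Y q ∧ n + (q.2 : ℤ) - (q.1 : ℤ) = i := by
        rintro ⟨q, hq, hqc⟩
        exact excl hp hq (by omega)
      rw [fT_single_of hp hpc, map_neg, eT_single_of (rem_addBox_self hp) hpc,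
        removeBox_addBox hp (rem_addBox_self hp), eT_single_zero hnR, map_zero,
        hT_single]
      have hsig : sig n i Y = 1 := by rw [sig, if_pos ⟨p, hp, hpc⟩]
      rw [hsig, neg_neg, sub_zero, one_smul]
    · by_cases hR : ∃ q : ℕ × ℕ, Removable Y q ∧ n + (q.2 : ℤ) - (q.1 : ℤ) = i
      · obtain ⟨q, hq, hqc⟩ := hR
        rw [eT_single_of hq hqc, map_neg, fT_single_of (add_removeBox_self hq) hqc,
          addBox_removeBox hq (add_removeBox_self hq), fT_single_zero hA, map_zero,
          hT_single]
        have hsig : sig n i Y = -1 := by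
          rw [sig, if_neg hA, if_pos ⟨q, hq, hqc⟩]
        rw [hsig, neg_neg, zero_sub, neg_smul, one_smul]
      · rw [fT_single_zero hA, eT_single_zero hR, map_zero, map_zero, hT_single]
        have hsig : sig n i Y = 0 := by rw [sig, if_neg hA, if_neg hR]
        rw [hsig, zero_smul, sub_zero]
  · rw [if_neg hij]
    apply end_ext
    intro Y
    rw [LinearMap.sub_apply, Module.End.mul_apply, Module.End.mul_apply, LinearMap.zero_apply,
      sub_eq_zero]
    by_cases hA : ∃ p : ℕ × ℕ, Addable Y p ∧ n + (p.2 : ℤ) - (p.1 : ℤ) = j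
    · obtain ⟨p, hp, hpc⟩ := hA
      by_cases hR : ∃ q : ℕ × ℕ, Removable Y q ∧ n + (q.2 : ℤ) - (q.1 : ℤ) = i
      · obtain ⟨q, hq, hqc⟩ := hR
        have hpq : p ≠ q := fun he => (addable_iff.mp hp).1 (he ▸ (removable_iff.mp hq).1)
        by_cases hD : (q.1 + 1, q.2) = p ∨ (q.1, q.2 + 1) = p
        · -- both sides vanish
          have hL : ¬∃ w : ℕ × ℕ, Removable (addBox Y p) w ∧ n + (w.2 : ℤ) - w.1 = i := by
            rintro ⟨w, hw, hwc⟩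
            have hwp : w ≠ p := fun he => by subst he; omega
            have hwY : Removable Y w := rem_of_rem_addBox hp hw hwp
            have hwq : w = q := uniq_rem hwY hq (by omega)
            subst hwq
            have hw' := removable_iff.mp hw
            rcases hD with hD | hD
            · exact hw'.2.1 ((mem_addBox hp _).2 (Or.inl hD))
            · exact hw'.2.2 ((mem_addBox hp _).2 (Or.inl hD))
          have hRt : ¬∃ z : ℕ × ℕ, Addable (removeBox Y q) z ∧ n + (z.2 : ℤ) - z.1 = j := by
            rintro ⟨z, hz, hzc⟩
            have hzq : z ≠ q := fun he => by subst he; omega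
            have hzY : Addable Y z := add_of_add_removeBox hq hz hzq
            have hzp : z = p := uniq_add hzY hp (by omega)
            subst hzp
            have hz' := addable_iff.mp hz
            rcases hD with hD | hD
            · have hpre := hz'.2.1 q.1 (by rw [← hD])
              have he : (q.1, z.2) = q := by
                rw [← hD]
              rw [he, mem_removeBox hq] at hpre
              exact hpre.1 rfl
            · have hpre := hz'.2.2 q.2 (by rw [← hD])
              have he : (z.1, q.2) = q := by
                rw [← hD]
              rw [he, mem_removeBox hq] at hpre
              exact hpre.1 rfl
          rw [fT_single_of hp hpc, map_neg, eT_single_zero hL, eT_single_of hq hqc,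
            map_neg, fT_single_zero hRt, neg_zero]
        · push_neg at hD
          have hq' : Removable (addBox Y p) q := rem_addBox_of_rem hp hq hD.1 hD.2
          have hp' : Addable (removeBox Y q) p := by
            obtain ⟨p1, p2⟩ := p
            obtain ⟨q1, q2⟩ := q
            refine add_removeBox_of_add hq hp ?_ ?_
            · intro k hk he
              apply hD.1
              rw [Prod.mk.injEq] at he ⊢
              omega
            · intro k hk he
              apply hD.2
              rw [Prod.mk.injEq] at he ⊢
              omega
          rw [fT_single_of hp hpc, map_neg, eT_single_of hq' hqc, eT_single_of hq hqc,
            map_neg, fT_single_of hp' hpc, neg_neg, neg_neg]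
          congr 1
          ext x
          simp only [YoungDiagram.mem_cells]
          rw [mem_removeBox hq', mem_addBox hp, mem_addBox hp', mem_removeBox hq]
          constructor
          · rintro ⟨hxq, rfl | hx⟩
            · exact Or.inl rfl
            · exact Or.inr ⟨hxq, hx⟩
          · rintro (rfl | ⟨hxq, hx⟩)
            · exact ⟨hpq, Or.inl rfl⟩
            · exact ⟨hxq, Or.inr hx⟩
      · have hL : ¬∃ w : ℕ × ℕ, Removable (addBox Y p) w ∧ n + (w.2 : ℤ) - w.1 = i := by
          rintro ⟨w, hw, hwc⟩
          have hwp : w ≠ p := fun he => by subst he; omega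
          exact hR ⟨w, rem_of_rem_addBox hp hw hwp, hwc⟩
        rw [fT_single_of hp hpc, map_neg, eT_single_zero hL, neg_zero,
          eT_single_zero hR, map_zero]
    · by_cases hR : ∃ q : ℕ × ℕ, Removable Y q ∧ n + (q.2 : ℤ) - (q.1 : ℤ) = i
      · obtain ⟨q, hq, hqc⟩ := hR
        have hRt : ¬∃ z : ℕ × ℕ, Addable (removeBox Y q) z ∧ n + (z.2 : ℤ) - z.1 = j := by
          rintro ⟨z, hz, hzc⟩
          have hzq : z ≠ q := fun he => by subst he; omega
          exact hA ⟨z, add_of_add_removeBox hq hz hzq, hzc⟩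
        rw [fT_single_zero hA, map_zero, eT_single_of hq hqc, map_neg,
          fT_single_zero hRt, neg_zero]
      · rw [fT_single_zero hA, map_zero, eT_single_zero hR, map_zero]

lemma part_hh (n i j : ℤ) : hT n i * hT n j = hT n j * hT n i := by
  apply end_ext
  intro Y
  simp only [Module.End.mul_apply, hT_single, map_smul, smul_smul]
  rw [mul_comm]

lemma part_he (n i j : ℤ) :
    hT n i * eT n j - eT n j * hT n i = aCartan i j • eT n j := by
  apply end_ext
  intro Y
  rw [LinearMap.sub_apply, Module.End.mul_apply, Module.End.mul_apply, LinearMap.smul_apply]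
  by_cases hR : ∃ q : ℕ × ℕ, Removable Y q ∧ n + (q.2 : ℤ) - (q.1 : ℤ) = j
  · obtain ⟨q, hq, hqc⟩ := hR
    rw [eT_single_of hq hqc, map_neg, hT_single, hT_single, map_smul,
      eT_single_of hq hqc]
    have key := sig_removeBox (i := i) hq hqc
    rw [← key, smul_neg, smul_neg, sub_smul]
    abel
  · rw [eT_single_zero hR, map_zero, hT_single, map_smul, eT_single_zero hR,
      smul_zero, smul_zero, sub_zero]

lemma part_hf (n i j : ℤ) :
    hT n i * fT n j - fT n j * hT n i = -aCartan i j • fT n j := by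
  apply end_ext
  intro Y
  rw [LinearMap.sub_apply, Module.End.mul_apply, Module.End.mul_apply, LinearMap.smul_apply]
  by_cases hA : ∃ p : ℕ × ℕ, Addable Y p ∧ n + (p.2 : ℤ) - (p.1 : ℤ) = j
  · obtain ⟨p, hp, hpc⟩ := hA
    rw [fT_single_of hp hpc, map_neg, hT_single, hT_single, map_smul,
      fT_single_of hp hpc]
    have key := sig_addBox (i := i) hp hpc
    rw [← key, smul_neg, smul_neg, neg_smul, neg_neg, sub_smul]
    abel
  · rw [fT_single_zero hA, map_zero, hT_single, map_smul, fT_single_zero hA,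
      smul_zero, smul_zero, sub_zero]

lemma part_ee (n i j : ℤ) (hgap : i - j ≥ 2 ∨ j - i ≥ 2) :
    eT n i * eT n j = eT n j * eT n i := by
  apply end_ext
  intro Y
  rw [Module.End.mul_apply, Module.End.mul_apply]
  by_cases hRj : ∃ q : ℕ × ℕ, Removable Y q ∧ n + (q.2 : ℤ) - (q.1 : ℤ) = j
  · obtain ⟨qj, hqj, hjc⟩ := hRj
    by_cases hRi : ∃ q : ℕ × ℕ, Removable Y q ∧ n + (q.2 : ℤ) - (q.1 : ℤ) = i
    · obtain ⟨qi, hqi, hic⟩ := hRi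
      have hne : qi ≠ qj := fun he => by subst he; omega
      have hi' : Removable (removeBox Y qj) qi := rem_removeBox_of_rem hqj hqi hne
      have hj' : Removable (removeBox Y qi) qj := rem_removeBox_of_rem hqi hqj hne.symm
      rw [eT_single_of hqj hjc, map_neg, eT_single_of hi' hic,
        eT_single_of hqi hic, map_neg, eT_single_of hj' hjc, neg_neg, neg_neg]
      congr 1
      ext x
      simp only [YoungDiagram.mem_cells]
      rw [mem_removeBox hi', mem_removeBox hqj, mem_removeBox hj', mem_removeBox hqi]
      tauto
    · have hz : ¬∃ w : ℕ × ℕ, Removable (removeBox Y qj) w ∧ n + (w.2 : ℤ) - w.1 = i := by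
        rintro ⟨w, hw, hwc⟩
        rcases rem_removeBox_cases hqj hw with hwY | h | h
        · exact hRi ⟨w, hwY, hwc⟩
        · obtain ⟨w1, w2⟩ := w; obtain ⟨q1, q2⟩ := qj
          rw [Prod.mk.injEq] at h
          rcases hgap with hg | hg <;> omega
        · obtain ⟨w1, w2⟩ := w; obtain ⟨q1, q2⟩ := qj
          rw [Prod.mk.injEq] at h
          rcases hgap with hg | hg <;> omega
      rw [eT_single_of hqj hjc, map_neg, eT_single_zero hz, neg_zero,
        eT_single_zero hRi, map_zero]
  · by_cases hRi : ∃ q : ℕ × ℕ, Removable Y q ∧ n + (q.2 : ℤ) - (q.1 : ℤ) = i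
    · obtain ⟨qi, hqi, hic⟩ := hRi
      have hz : ¬∃ w : ℕ × ℕ, Removable (removeBox Y qi) w ∧ n + (w.2 : ℤ) - w.1 = j := by
        rintro ⟨w, hw, hwc⟩
        rcases rem_removeBox_cases hqi hw with hwY | h | h
        · exact hRj ⟨w, hwY, hwc⟩
        · obtain ⟨w1, w2⟩ := w; obtain ⟨q1, q2⟩ := qi
          rw [Prod.mk.injEq] at h
          rcases hgap with hg | hg <;> omega
        · obtain ⟨w1, w2⟩ := w; obtain ⟨q1, q2⟩ := qi
          rw [Prod.mk.injEq] at h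
          rcases hgap with hg | hg <;> omega
      rw [eT_single_zero hRj, map_zero, eT_single_of hqi hic, map_neg,
        eT_single_zero hz, neg_zero]
    · rw [eT_single_zero hRj, map_zero, eT_single_zero hRi, map_zero]

lemma part_ff (n i j : ℤ) (hgap : i - j ≥ 2 ∨ j - i ≥ 2) :
    fT n i * fT n j = fT n j * fT n i := by
  apply end_ext
  intro Y
  rw [Module.End.mul_apply, Module.End.mul_apply]
  by_cases hAj : ∃ p : ℕ × ℕ, Addable Y p ∧ n + (p.2 : ℤ) - (p.1 : ℤ) = j
  · obtain ⟨pj, hpj, hjc⟩ := hAj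
    by_cases hAi : ∃ p : ℕ × ℕ, Addable Y p ∧ n + (p.2 : ℤ) - (p.1 : ℤ) = i
    · obtain ⟨pi, hpi, hic⟩ := hAi
      have hne : pi ≠ pj := fun he => by subst he; omega
      have hi' : Addable (addBox Y pj) pi := add_addBox_of_add hpj hpi hne
      have hj' : Addable (addBox Y pi) pj := add_addBox_of_add hpi hpj hne.symm
      rw [fT_single_of hpj hjc, map_neg, fT_single_of hi' hic,
        fT_single_of hpi hic, map_neg, fT_single_of hj' hjc, neg_neg, neg_neg]
      congr 1
      ext x
      simp only [YoungDiagram.mem_cells]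
      rw [mem_addBox hi', mem_addBox hpj, mem_addBox hj', mem_addBox hpi]
      tauto
    · have hz : ¬∃ w : ℕ × ℕ, Addable (addBox Y pj) w ∧ n + (w.2 : ℤ) - w.1 = i := by
        rintro ⟨w, hw, hwc⟩
        rcases add_addBox_cases hpj hw with hwY | h | h
        · exact hAi ⟨w, hwY, hwc⟩
        · obtain ⟨w1, w2⟩ := w; obtain ⟨q1, q2⟩ := pj
          rw [Prod.mk.injEq] at h
          rcases hgap with hg | hg <;> omega
        · obtain ⟨w1, w2⟩ := w; obtain ⟨q1, q2⟩ := pj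
          rw [Prod.mk.injEq] at h
          rcases hgap with hg | hg <;> omega
      rw [fT_single_of hpj hjc, map_neg, fT_single_zero hz, neg_zero,
        fT_single_zero hAi, map_zero]
  · by_cases hAi : ∃ p : ℕ × ℕ, Addable Y p ∧ n + (p.2 : ℤ) - (p.1 : ℤ) = i
    · obtain ⟨pi, hpi, hic⟩ := hAi
      have hz : ¬∃ w : ℕ × ℕ, Addable (addBox Y pi) w ∧ n + (w.2 : ℤ) - w.1 = j := by
        rintro ⟨w, hw, hwc⟩
        rcases add_addBox_cases hpi hw with hwY | h | h
        · exact hAj ⟨w, hwY, hwc⟩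
        · obtain ⟨w1, w2⟩ := w; obtain ⟨q1, q2⟩ := pi
          rw [Prod.mk.injEq] at h
          rcases hgap with hg | hg <;> omega
        · obtain ⟨w1, w2⟩ := w; obtain ⟨q1, q2⟩ := pi
          rw [Prod.mk.injEq] at h
          rcases hgap with hg | hg <;> omega
      rw [fT_single_zero hAj, map_zero, fT_single_of hpi hic, map_neg,
        fT_single_zero hz, neg_zero]
    · rw [fT_single_zero hAj, map_zero, fT_single_zero hAi, map_zero]

lemma eT_sq (n i : ℤ) : eT n i * eT n i = 0 := by
  apply end_ext
  intro Y
  rw [Module.End.mul_apply, LinearMap.zero_apply]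
  by_cases hR : ∃ q : ℕ × ℕ, Removable Y q ∧ n + (q.2 : ℤ) - (q.1 : ℤ) = i
  · obtain ⟨q, hq, hqc⟩ := hR
    have hz : ¬∃ w : ℕ × ℕ, Removable (removeBox Y q) w ∧ n + (w.2 : ℤ) - w.1 = i := by
      rintro ⟨w, hw, hwc⟩
      rcases rem_removeBox_cases hq hw with hwY | h | h
      · have hwq : w = q := uniq_rem hwY hq (by omega)
        subst hwq
        have hmem := (removable_iff.mp hw).1
        rw [mem_removeBox hq] at hmem
        exact hmem.1 rfl
      · obtain ⟨w1, w2⟩ := w; obtain ⟨q1, q2⟩ := q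
        rw [Prod.mk.injEq] at h
        omega
      · obtain ⟨w1, w2⟩ := w; obtain ⟨q1, q2⟩ := q
        rw [Prod.mk.injEq] at h
        omega
    rw [eT_single_of hq hqc, map_neg, eT_single_zero hz, neg_zero]
  · rw [eT_single_zero hR, map_zero]

lemma fT_sq (n i : ℤ) : fT n i * fT n i = 0 := by
  apply end_ext
  intro Y
  rw [Module.End.mul_apply, LinearMap.zero_apply]
  by_cases hA : ∃ p : ℕ × ℕ, Addable Y p ∧ n + (p.2 : ℤ) - (p.1 : ℤ) = i
  · obtain ⟨p, hp, hpc⟩ := hA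
    have hz : ¬∃ w : ℕ × ℕ, Addable (addBox Y p) w ∧ n + (w.2 : ℤ) - w.1 = i := by
      rintro ⟨w, hw, hwc⟩
      rcases add_addBox_cases hp hw with hwY | h | h
      · have hwp : w = p := uniq_add hwY hp (by omega)
        subst hwp
        exact (addable_iff.mp hw).1 ((mem_addBox hp _).2 (Or.inl rfl))
      · obtain ⟨w1, w2⟩ := w; obtain ⟨q1, q2⟩ := p
        rw [Prod.mk.injEq] at h
        omega
      · obtain ⟨w1, w2⟩ := w; obtain ⟨q1, q2⟩ := p
        rw [Prod.mk.injEq] at h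
        omega
    rw [fT_single_of hp hpc, map_neg, fT_single_zero hz, neg_zero]
  · rw [fT_single_zero hA, map_zero]

lemma eT_mid (n i j : ℤ) (h' : i - j = 1 ∨ i - j = -1) :
    eT n i * (eT n j * eT n i) = 0 := by
  apply end_ext
  intro Y
  rw [Module.End.mul_apply, Module.End.mul_apply, LinearMap.zero_apply]
  by_cases hR : ∃ q : ℕ × ℕ, Removable Y q ∧ n + (q.2 : ℤ) - (q.1 : ℤ) = i
  · obtain ⟨q, hq, hqc⟩ := hR
    rw [eT_single_of hq hqc, map_neg]
    by_cases hR2 : ∃ w : ℕ × ℕ, Removable (removeBox Y q) w ∧ n + (w.2 : ℤ) - w.1 = j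
    · obtain ⟨w, hw, hwc⟩ := hR2
      have hd : (w.2 : ℤ) - w.1 = (q.2 : ℤ) - q.1 + 1 ∨
          (w.2 : ℤ) - w.1 = (q.2 : ℤ) - q.1 - 1 := by
        rcases h' with h' | h'
        · right; omega
        · left; omega
      have hz := emid_core hq hw hd
      have hz' : ¬∃ z : ℕ × ℕ, Removable (removeBox (removeBox Y q) w) z ∧
          n + (z.2 : ℤ) - z.1 = i := by
        rintro ⟨z, hzr, hzc⟩
        exact hz ⟨z, hzr, by omega⟩
      rw [eT_single_of hw hwc, neg_neg, eT_single_zero hz']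
    · rw [eT_single_zero hR2, neg_zero, map_zero]
  · rw [eT_single_zero hR, map_zero, map_zero]

lemma fT_mid (n i j : ℤ) (h' : i - j = 1 ∨ i - j = -1) :
    fT n i * (fT n j * fT n i) = 0 := by
  apply end_ext
  intro Y
  rw [Module.End.mul_apply, Module.End.mul_apply, LinearMap.zero_apply]
  by_cases hA : ∃ p : ℕ × ℕ, Addable Y p ∧ n + (p.2 : ℤ) - (p.1 : ℤ) = i
  · obtain ⟨p, hp, hpc⟩ := hA
    rw [fT_single_of hp hpc, map_neg]
    by_cases hA2 : ∃ w : ℕ × ℕ, Addable (addBox Y p) w ∧ n + (w.2 : ℤ) - w.1 = j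
    · obtain ⟨w, hw, hwc⟩ := hA2
      have hd : (w.2 : ℤ) - w.1 = (p.2 : ℤ) - p.1 + 1 ∨
          (w.2 : ℤ) - w.1 = (p.2 : ℤ) - p.1 - 1 := by
        rcases h' with h' | h'
        · right; omega
        · left; omega
      have hz := fmid_core hp hw hd
      have hz' : ¬∃ z : ℕ × ℕ, Addable (addBox (addBox Y p) w) z ∧
          n + (z.2 : ℤ) - z.1 = i := by
        rintro ⟨z, hzr, hzc⟩
        exact hz ⟨z, hzr, by omega⟩
      rw [fT_single_of hw hwc, neg_neg, fT_single_zero hz']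
    · rw [fT_single_zero hA2, neg_zero, map_zero]
  · rw [fT_single_zero hA, map_zero, map_zero]


/-- The operators `ẽ_m`, `f̃_m`, `h̃_m` define a representation of the Lie algebra
`sl_∞` on the Fock space (the Fock space representation of highest weight `ϖ_n`):
they satisfy the defining relations of `sl_∞` stated via commutators. -/
theorem fock_space_sl_infinity_representation (n : ℤ) :
    (∀ i j : ℤ,
      eT n i * fT n j - fT n j * eT n i = if i = j then hT n i else 0) ∧
    (∀ i j : ℤ, hT n i * hT n j = hT n j * hT n i) ∧
    (∀ i j : ℤ, hT n i * eT n j - eT n j * hT n i = aCartan i j • eT n j) ∧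
    (∀ i j : ℤ, hT n i * fT n j - fT n j * hT n i = -aCartan i j • fT n j) ∧
    (∀ i j : ℤ, 2 ≤ |i - j| →
      eT n i * eT n j = eT n j * eT n i ∧ fT n i * fT n j = fT n j * fT n i) ∧
    (∀ i j : ℤ, |i - j| = 1 →
      eT n i * (eT n i * eT n j - eT n j * eT n i)
        - (eT n i * eT n j - eT n j * eT n i) * eT n i = 0 ∧
      fT n i * (fT n i * fT n j - fT n j * fT n i)
        - (fT n i * fT n j - fT n j * fT n i) * fT n i = 0) := by
  refine ⟨part_ef n, part_hh n, part_he n, part_hf n, fun i j h => ?_, fun i j h => ?_⟩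
  · have hgap : i - j ≥ 2 ∨ j - i ≥ 2 := by
      rcases abs_cases (i - j) with ⟨h1, _⟩ | ⟨h1, _⟩ <;> omega
    exact ⟨part_ee n i j hgap, part_ff n i j hgap⟩
  · have h' : i - j = 1 ∨ i - j = -1 := by
      rcases abs_cases (i - j) with ⟨h1, _⟩ | ⟨h1, _⟩ <;> omega
    constructor
    · have he := eT_sq n i
      have hm := eT_mid n i j h'
      have h1 : eT n i * (eT n i * eT n j) = 0 := by rw [← mul_assoc, he, zero_mul]
      have h2 : eT n i * eT n j * eT n i = 0 := by rw [mul_assoc]; exact hm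
      have h3 : eT n j * eT n i * eT n i = 0 := by rw [mul_assoc, he, mul_zero]
      rw [mul_sub, sub_mul, h1, hm, h2, h3]
      simp
    · have he := fT_sq n i
      have hm := fT_mid n i j h'
      have h1 : fT n i * (fT n i * fT n j) = 0 := by rw [← mul_assoc, he, zero_mul]
      have h2 : fT n i * fT n j * fT n i = 0 := by rw [mul_assoc]; exact hm
      have h3 : fT n j * fT n i * fT n i = 0 := by rw [mul_assoc, he, mul_zero]
      rw [mul_sub, sub_mul, h1, hm, h2, h3]
      simp
end
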